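/- Let β > 1 with β ∉ ℕ. Then: (a) for every x ∈ [l, l+1), every digit of d_G(x) belongs to 𝒜_G; (b) every element of 𝒜_G occurs as a digit of d_G(x) for some x ∈ [l, l+1) (so 𝒜_G is the minimal such alphabet); and (c) for every x ∈ I ∖ {r} there exists N ∈ ℕ such that D_G(T_G^{k}(x)) ∈ 𝒜_G for all k ≥ N. -/

import Mathlib

/-!
Measure a point `x ∈ I` by `t = β (x - l)`, and a point `y` by `u = β (r - y)`. In these
coordinates the digit maps become `D_v x = ⌊β⌋ - min ⌊β⌋ ⌊t⌋` and `D_m y = min ⌊β⌋ ⌊u⌋`, and both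
`T_v` and `T_m` become the same map `t ↦ β (t - min ⌊β⌋ ⌊t⌋)`, read alternately from the two ends
of `I`. So `T_G` is conjugate to the square of this map on `[0, β (r - l)]`.

This map sends `[0, β)` into itself, and on `[0, β)` the two digits it produces are exactly the
pairs making up `𝒜_G`; `[l, l + 1)` is the preimage of `[0, β)`, which gives (a) and (b). While
an orbit of the square stays off `[0, β)`, the square acts as `t ↦ β² t - β (β + 1) ⌊β⌋`, which
repels from its fixed point `β (r - l)` (the image of `r`); so every orbit other than that of `r`
enters `[0, β)`, which gives (c).
-/

open Set Function

theorem iterate_semiconj_of_mapsTo {α γ : Type*} {f : α → α} {g : γ → γ} {φ : α → γ}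
    {s : Set α} (hs : MapsTo f s s) (h : ∀ x ∈ s, φ (f x) = g (φ x)) {x : α} (hx : x ∈ s)
    (n : ℕ) : φ (f^[n] x) = g^[n] (φ x) := by
  induction n generalizing x with
  | zero => rfl
  | succ n ih => rw [iterate_succ_apply, iterate_succ_apply, ih (hs hx), h x hx]

theorem mem_Icc_of_mul_mem_Icc {K : Type*} [Field K] [LinearOrder K] [IsStrictOrderedRing K]
    {c s d : K} (hc : 0 < c) (h : c * s ∈ Icc 0 (c * d)) : s ∈ Icc 0 d :=
  ⟨(mul_nonneg_iff_of_pos_left hc).1 h.1, le_of_mul_le_mul_left h.2 hc⟩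

namespace NegBeta

variable {β l r t L : ℝ}

noncomputable def truncFloor (β t : ℝ) : ℤ := min ⌊β⌋ ⌊t⌋

noncomputable def truncStep (β t : ℝ) : ℝ := β * (t - truncFloor β t)

noncomputable def stepG (β : ℝ) : ℝ → ℝ := truncStep β ∘ truncStep β

noncomputable def digitG (β t : ℝ) : ℝ :=
  -β * ((⌊β⌋ - truncFloor β t : ℤ) : ℝ) + truncFloor β (truncStep β t)

def alphabetG (β : ℝ) : Set ℝ :=
  {X : ℝ | ∃ a b : ℤ, 0 ≤ a ∧ a ≤ ⌊β⌋ ∧ 1 ≤ b ∧ b ≤ ⌊β⌋ ∧ X = -(b : ℝ) * β + a} ∪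
  {X : ℝ | ∃ a : ℤ, 0 ≤ a ∧ a ≤ ⌊β⌋ ∧ (a : ℝ) < β * (β - ⌊β⌋) ∧ X = (a : ℝ)}

def digitInterval (β l r : ℝ) (a : ℤ) : Set ℝ := Icc (l + ((⌊β⌋ : ℝ) - a) / β) (r - a / β)

theorem truncFloor_le_floor : truncFloor β t ≤ ⌊t⌋ := min_le_right _ _

theorem truncFloor_le : truncFloor β t ≤ ⌊β⌋ := min_le_left _ _

theorem truncFloor_eq_floor_of_lt (ht : t < β) : truncFloor β t = ⌊t⌋ :=
  min_eq_right (Int.floor_mono ht.le)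

theorem truncFloor_eq_of_le (ht : β ≤ t) : truncFloor β t = ⌊β⌋ :=
  min_eq_left (Int.floor_mono ht)

theorem truncStep_nonneg (hβ : 0 ≤ β) : 0 ≤ truncStep β t :=
  mul_nonneg hβ (sub_nonneg.2 ((Int.cast_le.2 truncFloor_le_floor).trans (Int.floor_le t)))

theorem truncStep_lt (hβ : 0 < β) (ht : t < β) : truncStep β t < β := by
  refine mul_lt_of_lt_one_right hβ ?_
  rw [truncFloor_eq_floor_of_lt ht]
  linarith [Int.lt_floor_add_one t]

theorem truncStep_eq_of_le (ht : β ≤ t) : truncStep β t = β * (t - ⌊β⌋) := by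
  rw [truncStep, truncFloor_eq_of_le ht]

theorem mapsTo_truncStep_Ico (hβ : 0 < β) : MapsTo (truncStep β) (Ico 0 β) (Ico 0 β) :=
  fun _ ht => ⟨truncStep_nonneg hβ.le, truncStep_lt hβ ht.2⟩

theorem mapsTo_truncStep_Icc (hβ : 1 < β) (hL : β * (L - ⌊β⌋) = L) :
    MapsTo (truncStep β) (Icc 0 L) (Icc 0 L) := by
  intro t ht
  refine ⟨truncStep_nonneg (by linarith), ?_⟩
  rcases lt_or_ge t β with htβ | htβ
  · have hβL : β ≤ L := by nlinarith [Int.sub_one_lt_floor β]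
    exact (truncStep_lt (by linarith) htβ).le.trans hβL
  · rw [truncStep_eq_of_le htβ]
    nlinarith [ht.2]

theorem mapsTo_stepG_Ico (hβ : 0 < β) : MapsTo (stepG β) (Ico 0 β) (Ico 0 β) :=
  (mapsTo_truncStep_Ico hβ).comp (mapsTo_truncStep_Ico hβ)

theorem mapsTo_stepG_Icc (hβ : 1 < β) (hL : β * (L - ⌊β⌋) = L) :
    MapsTo (stepG β) (Icc 0 L) (Icc 0 L) :=
  (mapsTo_truncStep_Icc hβ hL).comp (mapsTo_truncStep_Icc hβ hL)

theorem digitG_mem_alphabetG (hβ : 0 < β) (ht : t ∈ Ico 0 β) : digitG β t ∈ alphabetG β := by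
  set u := truncStep β t with hu
  have huβ : u < β := truncStep_lt hβ ht.2
  have ha0 : 0 ≤ ⌊u⌋ := Int.floor_nonneg.2 (truncStep_nonneg hβ.le)
  have haF : ⌊u⌋ ≤ ⌊β⌋ := Int.floor_mono huβ.le
  have hm0 : 0 ≤ truncFloor β t :=
    le_min (Int.floor_nonneg.2 hβ.le) (Int.floor_nonneg.2 ht.1)
  have hdigit : digitG β t = -β * ((⌊β⌋ - truncFloor β t : ℤ) : ℝ) + ⌊u⌋ := by
    rw [digitG, ← hu, truncFloor_eq_floor_of_lt huβ]
  rcases (truncFloor_le (β := β) (t := t)).lt_or_eq with hlt | heq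
  · exact Or.inl ⟨⌊u⌋, ⌊β⌋ - truncFloor β t, ha0, haF, by omega, by omega, by rw [hdigit]; ring⟩
  · refine Or.inr ⟨⌊u⌋, ha0, haF, ?_, by rw [hdigit, heq]; simp⟩
    calc (⌊u⌋ : ℝ) ≤ u := Int.floor_le u
      _ = β * (t - ⌊β⌋) := by rw [hu, truncStep, heq]
      _ < β * (β - ⌊β⌋) := by gcongr; exact ht.2

theorem digitG_eq (hβ : 0 < β) (hF : (⌊β⌋ : ℝ) < β) {a b : ℤ} (ha0 : 0 ≤ a) (haF : a ≤ ⌊β⌋)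
    (hb0 : 0 ≤ b) : digitG β (⌊β⌋ - b + a / β) = -b * β + a := by
  have ha : 0 ≤ (a : ℝ) / β := div_nonneg (by exact_mod_cast ha0) hβ.le
  have ha1 : (a : ℝ) / β < 1 := (div_lt_one hβ).2 ((Int.cast_le.2 haF).trans_lt hF)
  have hfloor : ⌊(⌊β⌋ : ℝ) - b + a / β⌋ = ⌊β⌋ - b := by
    rw [Int.floor_eq_iff]
    push_cast
    constructor <;> linarith
  have hm : truncFloor β (⌊β⌋ - b + a / β) = ⌊β⌋ - b := by
    rw [truncFloor, hfloor]
    exact min_eq_right (by omega)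
  have hstep : truncStep β (⌊β⌋ - b + a / β) = a := by
    rw [truncStep, hm]
    push_cast
    field_simp
    ring
  rw [digitG, hm, hstep, truncFloor, Int.floor_intCast, min_eq_right haF]
  push_cast
  ring

theorem exists_digitG_eq (hβ : 0 < β) (hF : (⌊β⌋ : ℝ) < β) {X : ℝ} (hX : X ∈ alphabetG β) :
    ∃ t ∈ Ico 0 β, digitG β t = X := by
  rcases hX with ⟨a, b, ha0, haF, hb1, hbF, rfl⟩ | ⟨a, ha0, haF, haβ, rfl⟩
  · have ha : 0 ≤ (a : ℝ) / β := div_nonneg (by exact_mod_cast ha0) hβ.le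
    have ha1 : (a : ℝ) / β < 1 := (div_lt_one hβ).2 ((Int.cast_le.2 haF).trans_lt hF)
    have hb : (1 : ℝ) ≤ b ∧ (b : ℝ) ≤ ⌊β⌋ := ⟨by exact_mod_cast hb1, by exact_mod_cast hbF⟩
    exact ⟨⌊β⌋ - b + a / β, ⟨by linarith, by linarith⟩, digitG_eq hβ hF ha0 haF (by omega)⟩
  · have ha : 0 ≤ (a : ℝ) / β := div_nonneg (by exact_mod_cast ha0) hβ.le
    have haβ' : (a : ℝ) / β < β - ⌊β⌋ := (div_lt_iff₀' hβ).2 haβ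
    have hF0 : (0 : ℝ) ≤ ⌊β⌋ := by exact_mod_cast Int.floor_nonneg.2 hβ.le
    refine ⟨⌊β⌋ - (0 : ℤ) + a / β, ⟨by push_cast; linarith, by push_cast; linarith⟩, ?_⟩
    simpa using digitG_eq hβ hF ha0 haF le_rfl

theorem sub_stepG_eq_of_le (hβ : 1 < β) (hL : β * (L - ⌊β⌋) = L) (h : β ≤ stepG β t) :
    L - stepG β t = β ^ 2 * (L - t) := by
  have hu : β ≤ truncStep β t := not_lt.1 fun hu => h.not_gt (truncStep_lt (by linarith) hu)
  have ht : β ≤ t := not_lt.1 fun ht => hu.not_gt (truncStep_lt (by linarith) ht)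
  rw [stepG, comp_apply, truncStep_eq_of_le hu, truncStep_eq_of_le ht]
  linear_combination (-(β + 1)) * hL

theorem exists_iterate_stepG_lt (hβ : 1 < β) (hL : β * (L - ⌊β⌋) = L) (ht : t < L) :
    ∃ N, (stepG β)^[N] t < β := by
  by_contra! h
  have hexp : ∀ N, L - (stepG β)^[N] t = (β ^ 2) ^ N * (L - t) := by
    intro N
    induction N with
    | zero => simp
    | succ N ih =>
      have hN := h (N + 1)
      rw [iterate_succ_apply'] at hN ⊢
      rw [sub_stepG_eq_of_le hβ hL hN, ih, pow_succ]
      ring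
  obtain ⟨N, hN⟩ := pow_unbounded_of_one_lt (L / (L - t)) (one_lt_pow₀ hβ two_ne_zero)
  rw [div_lt_iff₀ (sub_pos.2 ht)] at hN
  linarith [hexp N, h N]

theorem eventually_iterate_stepG_mem_Ico (hβ : 1 < β) (hL : β * (L - ⌊β⌋) = L)
    (ht : t ∈ Ico 0 L) : ∃ N, ∀ k ≥ N, (stepG β)^[k] t ∈ Ico 0 β := by
  obtain ⟨N, hN⟩ := exists_iterate_stepG_lt hβ hL ht.2
  refine ⟨N, fun k hk => ?_⟩
  obtain ⟨j, rfl⟩ := Nat.exists_eq_add_of_le hk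
  rw [add_comm, iterate_add_apply]
  exact (mapsTo_stepG_Ico (by linarith)).iterate j
    ⟨((mapsTo_stepG_Icc hβ hL).iterate N ⟨ht.1, ht.2.le⟩).1, hN⟩

theorem mem_digitInterval_iff (hβ : 0 < β) {a : ℤ} {x : ℝ} :
    x ∈ digitInterval β l r a ↔ ⌊β⌋ - a ≤ β * (x - l) ∧ a ≤ β * (r - x) := by
  rw [digitInterval, mem_Icc]
  refine and_congr ?_ ?_
  · rw [add_comm, ← le_sub_iff_add_le, div_le_iff₀' hβ]
  · rw [le_sub_comm, div_le_iff₀' hβ]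

theorem Dv_eq (hβ : 0 < β) (hlr : ⌊β⌋ + 1 ≤ β * (r - l)) {Dv : ℝ → ℝ}
    (hDv0 : ∀ x ∈ digitInterval β l r 0, Dv x = 0)
    (hDv : ∀ a : ℤ, 1 ≤ a → a ≤ ⌊β⌋ →
      ∀ x ∈ digitInterval β l r a \ digitInterval β l r (a - 1), Dv x = a)
    {x : ℝ} (hx : x ∈ Icc l r) : Dv x = ⌊β⌋ - truncFloor β (β * (x - l)) := by
  set t := β * (x - l)
  have ht0 : 0 ≤ t := mul_nonneg hβ.le (sub_nonneg.2 hx.1)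
  have hrx : β * (r - x) = β * (r - l) - t := by ring
  rcases le_or_gt ⌊β⌋ ⌊t⌋ with h | h
  · rw [truncFloor, min_eq_left h, sub_self]
    refine hDv0 x ((mem_digitInterval_iff hβ).2 ⟨?_, ?_⟩)
    · simpa using Int.le_floor.1 h
    · simpa using mul_nonneg hβ.le (sub_nonneg.2 hx.2)
  · rw [truncFloor, min_eq_right h.le]
    have h0 : 0 ≤ ⌊t⌋ := Int.floor_nonneg.2 ht0
    have hmem := (mem_digitInterval_iff (l := l) (r := r) hβ (a := ⌊β⌋ - ⌊t⌋) (x := x)).2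
      ⟨by push_cast; linarith [Int.floor_le t], by push_cast; linarith [Int.lt_floor_add_one t]⟩
    have hnot : x ∉ digitInterval β l r (⌊β⌋ - ⌊t⌋ - 1) := fun hx' => by
      have := ((mem_digitInterval_iff hβ).1 hx').1
      push_cast at this
      linarith [Int.lt_floor_add_one t]
    simpa using hDv _ (by omega) (by omega) x ⟨hmem, hnot⟩

theorem Dm_eq (hβ : 0 < β) (hlr : ⌊β⌋ + 1 ≤ β * (r - l)) {Dm : ℝ → ℝ}
    (hDmTop : ∀ x ∈ digitInterval β l r ⌊β⌋, Dm x = ⌊β⌋)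
    (hDm : ∀ a : ℤ, 0 ≤ a → a < ⌊β⌋ →
      ∀ x ∈ digitInterval β l r a \ digitInterval β l r (a + 1), Dm x = a)
    {y : ℝ} (hy : y ∈ Icc l r) : Dm y = truncFloor β (β * (r - y)) := by
  set u := β * (r - y)
  have hu0 : 0 ≤ u := mul_nonneg hβ.le (sub_nonneg.2 hy.2)
  have hyl : β * (y - l) = β * (r - l) - u := by ring
  rcases le_or_gt ⌊β⌋ ⌊u⌋ with h | h
  · rw [truncFloor, min_eq_left h]
    refine hDmTop y ((mem_digitInterval_iff hβ).2 ⟨?_, Int.le_floor.1 h⟩)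
    simpa using mul_nonneg hβ.le (sub_nonneg.2 hy.1)
  · rw [truncFloor, min_eq_right h.le]
    have hmem := (mem_digitInterval_iff (l := l) (r := r) hβ (a := ⌊u⌋) (x := y)).2
      ⟨by linarith [Int.lt_floor_add_one u], Int.floor_le u⟩
    have hnot : y ∉ digitInterval β l r (⌊u⌋ + 1) := fun hy' => by
      have := ((mem_digitInterval_iff hβ).1 hy').2
      push_cast at this
      linarith [Int.lt_floor_add_one u]
    exact hDm _ (Int.floor_nonneg.2 hu0) h y ⟨hmem, hnot⟩

theorem eq_digitG_and_stepG_of_mem (hβ : 1 < β) (hl : β * l = -⌊β⌋ - r) (hr : β * r = -l)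
    {Dm Dv DG TG : ℝ → ℝ}
    (hm : ∀ y ∈ Icc l r, Dm y = truncFloor β (β * (r - y)))
    (hv : ∀ x ∈ Icc l r, Dv x = ⌊β⌋ - truncFloor β (β * (x - l)))
    (hDG : ∀ x, DG x = -β * Dv x + Dm (-β * x - Dv x))
    (hTG : ∀ x, TG x = β ^ 2 * x - DG x) {x : ℝ} (hx : x ∈ Icc l r) :
    DG x = digitG β (β * (x - l)) ∧ β * (TG x - l) = stepG β (β * (x - l)) ∧
      TG x ∈ Icc l r := by
  have hβ0 : 0 < β := by linarith
  have hL : β * (β * (r - l) - ⌊β⌋) = β * (r - l) := by linear_combination β * (hr - hl)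
  have ht : β * (x - l) ∈ Icc 0 (β * (r - l)) :=
    ⟨mul_nonneg hβ0.le (sub_nonneg.2 hx.1), by gcongr; exact hx.2⟩
  have hy : β * (r - (-β * x - Dv x)) = truncStep β (β * (x - l)) := by
    rw [hv x hx, truncStep]
    linear_combination β * hl
  have hyI : -β * x - Dv x ∈ Icc l r := by
    have := mem_Icc_of_mul_mem_Icc hβ0 (hy ▸ mapsTo_truncStep_Icc hβ hL ht)
    exact ⟨by linarith [this.2], by linarith [this.1]⟩
  have hDGx : DG x = digitG β (β * (x - l)) := by
    rw [hDG, hm _ hyI, hy, hv x hx, digitG]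
    push_cast
    ring
  have hTGx : β * (TG x - l) = stepG β (β * (x - l)) := by
    have hstep : stepG β (β * (x - l)) = β * (truncStep β (β * (x - l)) -
        truncFloor β (truncStep β (β * (x - l)))) := rfl
    rw [hTG, hDG, hm _ hyI, hy, hstep]
    linear_combination β * hy - β * hr
  have hz := mem_Icc_of_mul_mem_Icc hβ0 (hTGx ▸ mapsTo_stepG_Icc hβ hL ht)
  exact ⟨hDGx, hTGx, by linarith [hz.1], by linarith [hz.2]⟩

end NegBeta

open NegBeta

theorem stmt10 (β : ℝ) (hβ : 1 < β) (hni : ∀ n : ℕ, β ≠ n)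
    (l r : ℝ) (hl : l = -β * (⌊β⌋ : ℝ) / (β ^ 2 - 1)) (hr : r = (⌊β⌋ : ℝ) / (β ^ 2 - 1))
    (Ia : ℤ → Set ℝ)
    (hIa : ∀ a : ℤ, Ia a = Set.Icc (l + ((⌊β⌋ : ℝ) - a) / β) (r - a / β))
    (Dm Dv : ℝ → ℝ)
    (hDmTop : ∀ x ∈ Ia ⌊β⌋, Dm x = (⌊β⌋ : ℝ))
    (hDm : ∀ a : ℤ, 0 ≤ a → a < ⌊β⌋ → ∀ x ∈ Ia a \ Ia (a + 1), Dm x = (a : ℝ))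
    (hDv0 : ∀ x ∈ Ia 0, Dv x = 0)
    (hDv : ∀ a : ℤ, 1 ≤ a → a ≤ ⌊β⌋ → ∀ x ∈ Ia a \ Ia (a - 1), Dv x = (a : ℝ))
    (DG TG : ℝ → ℝ)
    (hDG : ∀ x, DG x = -β * Dv x + Dm (-β * x - Dv x))
    (hTG : ∀ x, TG x = β ^ 2 * x - DG x)
    (AG : Set ℝ)
    (hAG : AG =
      {X : ℝ | ∃ a b : ℤ, 0 ≤ a ∧ a ≤ ⌊β⌋ ∧ 1 ≤ b ∧ b ≤ ⌊β⌋ ∧ X = -(b : ℝ) * β + a} ∪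
      {X : ℝ | ∃ a : ℤ, 0 ≤ a ∧ a ≤ ⌊β⌋ ∧ (a : ℝ) < β * (β - ⌊β⌋) ∧ X = (a : ℝ)}) :
    -- (a) all digits of d_G(x) for x ∈ [l, l+1) lie in 𝒜_G
    (∀ x ∈ Set.Ico l (l + 1), ∀ k : ℕ, DG (TG^[k] x) ∈ AG) ∧
    -- (b) every element of 𝒜_G occurs as some digit (minimality of 𝒜_G)
    (∀ X ∈ AG, ∃ x ∈ Set.Ico l (l + 1), ∃ k : ℕ, DG (TG^[k] x) = X) ∧
    -- (c) for every x ∈ I ∖ {r}, the digits of d_G(x) eventually lie in 𝒜_G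
    (∀ x ∈ Set.Icc l r, x ≠ r → ∃ N : ℕ, ∀ k ≥ N, DG (TG^[k] x) ∈ AG) := by
  have hβ0 : 0 < β := by linarith
  have hF : (⌊β⌋ : ℝ) < β := (Int.floor_le β).lt_of_ne fun h =>
    hni ⌊β⌋₊ (by rw [natCast_floor_eq_intCast_floor hβ0.le, h])
  have hd : β ^ 2 - 1 ≠ 0 := by nlinarith
  have hl' : β * l = -⌊β⌋ - r := by rw [hl, hr]; field_simp; ring
  have hr' : β * r = -l := by rw [hl, hr]; field_simp
  have hLr : β * (r - l) = ⌊β⌋ + (r - l) := by linear_combination hr' - hl'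
  have hL : β * (β * (r - l) - ⌊β⌋) = β * (r - l) := by linear_combination β * hLr
  have hlr : 1 < r - l := by nlinarith [Int.sub_one_lt_floor β]
  obtain rfl : Ia = digitInterval β l r := funext hIa
  obtain rfl : AG = alphabetG β := hAG
  have hstep : ∀ x ∈ Icc l r, _ := fun x hx => eq_digitG_and_stepG_of_mem hβ hl' hr'
    (fun y hy => Dm_eq hβ0 (by linarith) hDmTop hDm hy)
    (fun y hy => Dv_eq hβ0 (by linarith) hDv0 hDv hy) hDG hTG hx
  have hmaps : MapsTo TG (Icc l r) (Icc l r) := fun x hx => (hstep x hx).2.2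
  have horbit : ∀ x ∈ Icc l r, ∀ k : ℕ,
      DG (TG^[k] x) = digitG β ((stepG β)^[k] (β * (x - l))) := fun x hx k => by
    rw [(hstep _ (hmaps.iterate k hx)).1, iterate_semiconj_of_mapsTo
      (φ := fun x => β * (x - l)) hmaps (fun y hy => (hstep y hy).2.1) hx]
  have hIco : ∀ x ∈ Ico l (l + 1), x ∈ Icc l r ∧ β * (x - l) ∈ Ico 0 β := fun x hx =>
    ⟨⟨hx.1, by linarith [hx.2]⟩, mul_nonneg hβ0.le (sub_nonneg.2 hx.1),
      mul_lt_of_lt_one_right hβ0 (by linarith [hx.2])⟩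
  refine ⟨fun x hx k => ?_, fun X hX => ?_, fun x hx hxr => ?_⟩
  · rw [horbit x (hIco x hx).1]
    exact digitG_mem_alphabetG hβ0 ((mapsTo_stepG_Ico hβ0).iterate k (hIco x hx).2)
  · obtain ⟨t, ⟨ht0, htβ⟩, rfl⟩ := exists_digitG_eq hβ0 hF hX
    have hx : l + t / β ∈ Ico l (l + 1) :=
      ⟨by linarith [div_nonneg ht0 hβ0.le], by linarith [(div_lt_one hβ0).2 htβ]⟩
    refine ⟨l + t / β, hx, 0, ?_⟩
    rw [horbit _ (hIco _ hx).1, iterate_zero_apply, add_sub_cancel_left,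
      mul_div_cancel₀ _ hβ0.ne']
  · obtain ⟨N, hN⟩ := eventually_iterate_stepG_mem_Ico hβ hL
      ⟨mul_nonneg hβ0.le (sub_nonneg.2 hx.1),
        mul_lt_mul_of_pos_left (by linarith [lt_of_le_of_ne hx.2 hxr]) hβ0⟩
    exact ⟨N, fun k hk => horbit x hx k ▸ digitG_mem_alphabetG hβ0 (hN k hk)⟩
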